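/- For every $q < 1$ and every $M > 0$, there exists a function $u \in BV(\mathbb{R}^d)$ ($d \geq 2$) of the form $u = \sum_{i=1}^N h_i \chi_{B(0,r_i)}$ such that $\|u\|_{L^{d/(d-1),q}(\mathbb{R}^d)} > M \cdot |Du|(\mathbb{R}^d)$. In particular, the Gagliardo–Nirenberg–Sobolev inequality $\|u\|_{L^{d/(d-1),q}} \leq C |Du|(\mathbb{R}^d)$ fails for every exponent $q < 1$ on the Lorentz scale. -/

import Mathlib

/-!
Take unit steps on nested balls whose radii satisfy `r_{k+1}^{d-1} = 1/(k+2)`, so that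
`|Du|(ℝ^d) = d ω_d S` with `S = ∑_{k<N} 1/(k+2)`. For `t ∈ (k, k+1)` the superlevel set
`{|u| > t}` is the single ball `B(0, r_{k+1})`, whose measure to the power `1/p = (d-1)/d` is
`ω_d^{1/p} r_{k+1}^{d-1} = ω_d^{1/p}/(k+2)`; as `t^{q-1} ≥ (k+2)^{q-1}` there, the Lorentz integral
is at least `ω_d^{q/p} S`. Hence `‖u‖_{L^{p,q}} ≥ c S^{1/q}`, and since `1/q > 1` and the harmonic
sum `S` is unbounded in `N`, this beats `M d ω_d S` for large `N`.
-/

open MeasureTheory Metric Set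

/-- The Lorentz quasinorm `‖u‖_{L^{p,q}} = (p ∫_0^∞ (t |{|u| > t}|^{1/p})^q dt/t)^{1/q}`. -/
noncomputable def lorentzQuasinorm (d : ℕ) (p q : ℝ)
    (u : EuclideanSpace ℝ (Fin d) → ℝ) : ℝ :=
  (p * ∫ t in Set.Ioi (0:ℝ),
    (t * (volume {x : EuclideanSpace ℝ (Fin d) | t < |u x|}).toReal ^ (1/p)) ^ q / t) ^ (1/q)

open Filter
open scoped Finset

section NestedSets

variable {α : Type*} {s : ℕ → Set α}

open Classical in
lemma sum_indicator_one_eq_card (N : ℕ) (x : α) :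
    ∑ i ∈ Finset.range N, (s i).indicator (1 : α → ℝ) x = #{i ∈ Finset.range N | x ∈ s i} := by
  simp [Set.indicator_apply]

open Classical in
lemma lt_card_filter_mem_iff (hs : Antitone s) {N k : ℕ} {x : α} :
    k < #{i ∈ Finset.range N | x ∈ s i} ↔ k < N ∧ x ∈ s k := by
  constructor
  · intro hk
    by_contra! hx
    have hsub : {i ∈ Finset.range N | x ∈ s i} ⊆ Finset.range k := by
      intro i hi
      rw [Finset.mem_filter, Finset.mem_range] at hi
      rw [Finset.mem_range]
      by_contra! hki
      exact hx (by omega) (hs hki hi.2)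
    exact (Finset.card_le_card hsub).not_gt (by simpa using hk)
  · rintro ⟨hkN, hx⟩
    have hsub : Finset.range (k + 1) ⊆ {i ∈ Finset.range N | x ∈ s i} := by
      intro i hi
      rw [Finset.mem_range] at hi
      exact Finset.mem_filter.2 ⟨Finset.mem_range.2 (by omega), hs (by omega) hx⟩
    simpa using Finset.card_le_card hsub

lemma setOf_lt_abs_sum_indicator (hs : Antitone s) (N : ℕ) {t : ℝ} (ht : 0 ≤ t) :
    {x | t < |∑ i ∈ Finset.range N, (s i).indicator (1 : α → ℝ) x|} =
      {x | ⌊t⌋₊ < N ∧ x ∈ s ⌊t⌋₊} := by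
  classical
  ext x
  rw [mem_ofPred_eq, sum_indicator_one_eq_card, Nat.abs_cast, ← Nat.floor_lt ht,
    lt_card_filter_mem_iff hs, mem_ofPred_eq]

end NestedSets

lemma integral_Ioi_eq_sum_intervalIntegral {F : ℝ → ℝ} {g : ℕ → ℝ → ℝ} {N : ℕ}
    (hF_zero : ∀ t, (N : ℝ) ≤ t → F t = 0) (hF : ∀ k < N, EqOn F (g k) (Ioo k (k + 1)))
    (hg : ∀ k < N, IntervalIntegrable (g k) volume k (k + 1)) :
    ∫ t in Ioi 0, F t = ∑ k ∈ Finset.range N, ∫ t in (k : ℝ)..k + 1, g k t := by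
  have hF_int : ∀ k < N, IntervalIntegrable F volume k ((k + 1 : ℕ) : ℝ) := fun k hk => by
    rw [Nat.cast_succ]
    exact (hg k hk).congr_uIoo (uIoo_of_le (by linarith : (k : ℝ) ≤ k + 1) ▸ (hF k hk).symm)
  calc ∫ t in Ioi 0, F t = ∫ t in Ioc 0 (N : ℝ), F t :=
        setIntegral_eq_of_subset_of_forall_sdiff_eq_zero measurableSet_Ioi Ioc_subset_Ioi_self
          fun t ht => hF_zero t (not_le.1 fun h => ht.2 ⟨ht.1, h⟩).le
    _ = ∫ t in (0 : ℝ)..N, F t := (intervalIntegral.integral_of_le N.cast_nonneg).symm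
    _ = ∑ k ∈ Finset.range N, ∫ t in (k : ℝ)..k + 1, F t := by
        simpa using (intervalIntegral.sum_integral_adjacent_intervals hF_int).symm
    _ = _ := Finset.sum_congr rfl fun k hk =>
        intervalIntegral.integral_congr_Ioo_of_le (by linarith) (hF k (Finset.mem_range.1 hk))

lemma mul_rpow_div_self {t c : ℝ} (ht : 0 < t) (hc : 0 ≤ c) (q : ℝ) :
    (t * c) ^ q / t = c ^ q * t ^ (q - 1) := by
  rw [Real.mul_rpow ht.le hc, Real.rpow_sub_one ht.ne']
  ring

lemma integral_lorentz_sum_indicator {α : Type*} [MeasurableSpace α] (μ : Measure α)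
    {s : ℕ → Set α} (hs : Antitone s) (N : ℕ) {p q : ℝ} (hp : p ≠ 0) (hq : 0 < q) :
    ∫ t in Ioi (0 : ℝ),
        (t * (μ {x | t < |∑ i ∈ Finset.range N, (s i).indicator (1 : α → ℝ) x|}).toReal ^
          (1 / p)) ^ q / t =
      ∑ k ∈ Finset.range N,
        ((μ (s k)).toReal ^ (1 / p)) ^ q * ∫ t in (k : ℝ)..k + 1, t ^ (q - 1) := by
  simp_rw [← intervalIntegral.integral_const_mul]
  refine integral_Ioi_eq_sum_intervalIntegral (fun t ht => ?_) (fun k hk t ht => ?_)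
    fun k _ => (intervalIntegral.intervalIntegrable_rpow' (by linarith)).const_mul _
  · have hN : ¬ ⌊t⌋₊ < N := not_lt.2 (Nat.le_floor ht)
    rw [setOf_lt_abs_sum_indicator hs N (N.cast_nonneg.trans ht)]
    simp [hN, Real.zero_rpow (inv_ne_zero hp), Real.zero_rpow hq.ne']
  · have ht0 : 0 < t := k.cast_nonneg.trans_lt ht.1
    have hfloor : ⌊t⌋₊ = k := Nat.floor_eq_on_Ico k t (Ioo_subset_Ico_self ht)
    rw [setOf_lt_abs_sum_indicator hs N ht0.le, hfloor]
    simp only [hk, true_and, ofPred_mem_eq]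
    exact mul_rpow_div_self ht0 (Real.rpow_nonneg ENNReal.toReal_nonneg _) q

lemma rpow_le_intervalIntegral_rpow {a c r : ℝ} (ha : 0 ≤ a) (hc : a + 1 ≤ c) (hr₀ : -1 < r)
    (hr : r ≤ 0) : c ^ r ≤ ∫ t in a..a + 1, t ^ r := by
  calc c ^ r = ∫ _ in a..a + 1, c ^ r := by simp
    _ ≤ ∫ t in a..a + 1, t ^ r :=
      intervalIntegral.integral_mono_on_of_le_Ioo (by linarith) intervalIntegrable_const
        (intervalIntegral.intervalIntegrable_rpow' hr₀) fun t ht =>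
          Real.rpow_le_rpow_of_nonpos (ha.trans_lt ht.1) (by linarith [ht.2]) hr

lemma measure_ball_toReal_rpow {E : Type*} [NormedAddCommGroup E] [NormedSpace ℝ E]
    [MeasurableSpace E] [BorelSpace E] [FiniteDimensional ℝ E] (μ : Measure E)
    [μ.IsAddHaarMeasure] (hE : Module.finrank ℝ E ≠ 0) (x : E) {r : ℝ} (hr : 0 < r) :
    (μ (ball x r)).toReal ^ (((Module.finrank ℝ E : ℝ) - 1) / Module.finrank ℝ E) =
      r ^ ((Module.finrank ℝ E : ℝ) - 1) *
        (μ (ball 0 1)).toReal ^ (((Module.finrank ℝ E : ℝ) - 1) / Module.finrank ℝ E) := by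
  rw [Measure.addHaar_ball_of_pos μ x hr, ENNReal.toReal_mul,
    ENNReal.toReal_ofReal (by positivity), Real.mul_rpow (by positivity) ENNReal.toReal_nonneg,
    ← Real.rpow_natCast, ← Real.rpow_mul hr.le, mul_div_cancel₀ _ (Nat.cast_ne_zero.2 hE)]

lemma tendsto_sum_range_inv_add_two_atTop :
    Tendsto (fun N : ℕ => ∑ k ∈ Finset.range N, ((k : ℝ) + 2)⁻¹) atTop atTop := by
  have h := (tendsto_atTop_add_const_right _ (-1)
    (Real.tendsto_sum_range_one_div_nat_succ_atTop.comp (tendsto_add_atTop_nat 1)))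
  refine h.congr fun N => ?_
  simp only [Function.comp_apply, Finset.sum_range_succ', one_div]
  push_cast
  ring_nf

lemma eventually_mul_lt_mul_rpow {a A : ℝ} (ha : 1 < a) (hA : 0 < A) (B : ℝ) :
    ∀ᶠ S in atTop, B * S < (A * S) ^ a := by
  filter_upwards [(tendsto_rpow_atTop (sub_pos.2 ha)).eventually_gt_atTop (B / A ^ a),
    eventually_gt_atTop 0] with S hS hS0
  rw [div_lt_iff₀ (Real.rpow_pos_of_pos hA a)] at hS
  rw [Real.mul_rpow hA.le hS0.le, ← div_mul_cancel₀ (S ^ a) hS0.ne', ← Real.rpow_sub_one hS0.ne']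
  nlinarith

lemma sum_inv_le_integral_lorentz_nested_balls {d : ℕ} (hd : 2 ≤ d) {q : ℝ} (hq0 : 0 < q)
    (hq1 : q < 1) {r : ℕ → ℝ} (hr : Antitone r) (hr_pos : ∀ i, 0 < r i)
    (hr_pow : ∀ k : ℕ, r (k + 1) ^ ((d : ℝ) - 1) = ((k : ℝ) + 2)⁻¹) (N : ℕ) :
    ((volume (ball (0 : EuclideanSpace ℝ (Fin d)) 1)).toReal ^ (((d : ℝ) - 1) / d)) ^ q *
        ∑ k ∈ Finset.range N, ((k : ℝ) + 2)⁻¹ ≤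
      ∫ t in Ioi (0 : ℝ), (t * (volume {x : EuclideanSpace ℝ (Fin d) |
        t < |∑ i ∈ Finset.range N, (ball 0 (r (i + 1))).indicator 1 x|}).toReal ^
          (1 / ((d : ℝ) / ((d : ℝ) - 1)))) ^ q / t := by
  have hd1 : (1 : ℝ) < d := by exact_mod_cast hd
  have hfin : Module.finrank ℝ (EuclideanSpace ℝ (Fin d)) = d := finrank_euclideanSpace_fin
  set β := (volume (ball (0 : EuclideanSpace ℝ (Fin d)) 1)).toReal ^ (((d : ℝ) - 1) / d)
  have hβ : 0 ≤ β := Real.rpow_nonneg ENNReal.toReal_nonneg _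
  have hballs : Antitone fun i => ball (0 : EuclideanSpace ℝ (Fin d)) (r (i + 1)) :=
    fun i j hij => ball_subset_ball (hr (Nat.succ_le_succ hij))
  rw [integral_lorentz_sum_indicator volume hballs N (by positivity) hq0, one_div_div,
    Finset.mul_sum]
  refine Finset.sum_le_sum fun k _ => ?_
  have hvol := measure_ball_toReal_rpow (volume : Measure (EuclideanSpace ℝ (Fin d)))
    (by omega) 0 (hr_pos (k + 1))
  rw [hfin] at hvol
  have hk : (0 : ℝ) < k + 2 := by positivity
  rw [hvol, hr_pow k]
  calc β ^ q * ((k : ℝ) + 2)⁻¹ = (((k : ℝ) + 2)⁻¹ * β) ^ q * ((k : ℝ) + 2) ^ (q - 1) := by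
        rw [Real.mul_rpow (inv_nonneg.2 hk.le) hβ, Real.inv_rpow hk.le, Real.rpow_sub_one hk.ne']
        field_simp
    _ ≤ (((k : ℝ) + 2)⁻¹ * β) ^ q * ∫ t in (k : ℝ)..k + 1, t ^ (q - 1) :=
        mul_le_mul_of_nonneg_left
          (rpow_le_intervalIntegral_rpow k.cast_nonneg (by linarith) (by linarith) (by linarith))
          (by positivity)

theorem lorentz_sobolev_fails_for_q_lt_one_general (d : ℕ) (hd : 2 ≤ d) (q : ℝ) (hq0 : 0 < q)
    (hq1 : q < 1) (M : ℝ) :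
    ∃ (N : ℕ) (h r : ℕ → ℝ), (∀ i, 0 < h i) ∧ (∀ i, 0 < r i) ∧ StrictAnti r ∧
      lorentzQuasinorm d ((d:ℝ)/((d:ℝ)-1)) q
          (fun x => ∑ i ∈ Finset.range N,
            h (i+1) * (ball (0:EuclideanSpace ℝ (Fin d)) (r (i+1))).indicator 1 x) >
        M * ∑ i ∈ Finset.range N,
          h (i+1) * ((d:ℝ) * (volume (ball (0:EuclideanSpace ℝ (Fin d)) 1)).toReal) *
            (r (i+1)) ^ ((d:ℝ) - 1) := by
  have hd1 : (1 : ℝ) < d := by exact_mod_cast hd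
  set ω := (volume (ball (0 : EuclideanSpace ℝ (Fin d)) 1)).toReal
  have hω : 0 < ω :=
    ENNReal.toReal_pos (measure_ball_pos volume 0 one_pos).ne' measure_ball_lt_top.ne
  have hA : 0 < (d : ℝ) / ((d : ℝ) - 1) * (ω ^ (((d : ℝ) - 1) / d)) ^ q := by
    have : (0 : ℝ) < d - 1 := by linarith
    positivity
  obtain ⟨N, hN⟩ := (tendsto_sum_range_inv_add_two_atTop.eventually
    (eventually_mul_lt_mul_rpow (one_lt_one_div hq0 hq1) hA (M * (d * ω)))).exists
  set r : ℕ → ℝ := fun i => ((i : ℝ) + 1)⁻¹ ^ ((d : ℝ) - 1)⁻¹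
  have hr_pos : ∀ i, 0 < r i := fun i => by positivity
  have hr_anti : StrictAnti r := fun i j hij =>
    Real.rpow_lt_rpow (by positivity) (by gcongr) (inv_pos.2 (by linarith))
  have hr_pow : ∀ k : ℕ, r (k + 1) ^ ((d : ℝ) - 1) = ((k : ℝ) + 2)⁻¹ := fun k => by
    rw [Real.rpow_inv_rpow (by positivity) (by linarith)]
    push_cast
    ring
  refine ⟨N, 1, r, fun _ => one_pos, hr_pos, hr_anti, ?_⟩
  simp only [Pi.one_apply, one_mul, hr_pow, ← Finset.mul_sum]
  rw [lorentzQuasinorm, gt_iff_lt, ← mul_assoc]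
  refine hN.trans_le (Real.rpow_le_rpow (by positivity) ?_ (by positivity))
  rw [mul_assoc]
  exact mul_le_mul_of_nonneg_left
    (sum_inv_le_integral_lorentz_nested_balls hd hq0 hq1 hr_anti.antitone hr_pos hr_pow N)
    (by positivity)

/-- for every `0 < q < 1` and every `M > 0` there is a finite sum of indicators of
nested balls `u = ∑_{i=1}^N h_i χ_{B(0,r_i)}` with
`‖u‖_{L^{d/(d-1),q}} > M |Du|(ℝ^d)`, where `|Du|(ℝ^d) = ∑ h_i (d ω_d) r_i^{d-1}` is the total
variation of `u`. Hence the Gagliardo–Nirenberg–Sobolev inequality fails on the Lorentz scale for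
every second exponent `q < 1`. -/
theorem lorentz_sobolev_fails_for_q_lt_one (d : ℕ) (hd : 2 ≤ d) (q : ℝ) (hq0 : 0 < q)
    (hq1 : q < 1) (M : ℝ) (hM : 0 < M) :
    ∃ (N : ℕ) (h r : ℕ → ℝ), (∀ i, 0 < h i) ∧ (∀ i, 0 < r i) ∧ StrictAnti r ∧
      lorentzQuasinorm d ((d:ℝ)/((d:ℝ)-1)) q
          (fun x => ∑ i ∈ Finset.range N,
            h (i+1) * (ball (0:EuclideanSpace ℝ (Fin d)) (r (i+1))).indicator 1 x) >
        M * ∑ i ∈ Finset.range N,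
          h (i+1) * ((d:ℝ) * (volume (ball (0:EuclideanSpace ℝ (Fin d)) 1)).toReal) *
            (r (i+1)) ^ ((d:ℝ) - 1) :=
  lorentz_sobolev_fails_for_q_lt_one_general d hd q hq0 hq1 M
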